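/- arXiv:1105.2881 — 2 statements merged into one kernel-verified Lean document; each statement's English description precedes it below -/
import Mathlib

section
/- Let (Φ_t)_{t≥0} be a continuous one-parameter semigroup on the right half-plane Π with Denjoy–Wolff point at ∞, generated by −φ, where φ admits the representation φ(w) = β + γ/(w+1) + ϱ₁(w) with β, γ ∈ ℂ, β ≠ 0, and w·ϱ₁(w) → 0 as |w| → ∞, w ∈ Π. Then for every w ∈ Π, lim_{t→∞} ( Φ_t(w) − βt − (γ/β)·log(t+1) ) / log(t+1) = 0; that is, Φ_t(w) = βt + (γ/β)log(t+1) + Γ₁(w,t) with Γ₁(w,t)/log(t+1) → 0 as t → ∞. -/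
/-! Along a trajectory `u t = Φ t w` we have `u' = φ(u)` and `|u| → ∞`, so the expansion of
`φ` gives `φ(u) → β` and `u (φ(u) - β) → γ`. Integrating the first (a Cesàro argument) gives
`u t ~ β t`, hence `(t + 1) (φ(u t) - β) → γ / β`. Then
`u t - β t - (γ / β) log (t + 1) = u 0 + ∫₀ᵗ ((s + 1) (φ(u s) - β) - γ / β) / (s + 1) ds`,
and the weighted Cesàro argument with weight `1 / (s + 1)`, whose integral is `log (t + 1)`,
makes this `o(log t)`. -/

open Complex Filter Topology Set MeasureTheory

noncomputable section

/-- The right half-plane in the complex plane. -/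
def rightHalfPlane : Set ℂ := {w : ℂ | 0 < w.re}

/-- A continuous one-parameter semigroup `Φ` on the right half-plane generated by `-φ`,
where `Re φ ≥ 0`: each `Φ t` is a holomorphic self-map of the half-plane, `Φ 0 = id`,
`Φ (t+s) = Φ t ∘ Φ s`, and for each `w` the trajectory `t ↦ Φ t w` solves
`∂Φ_t(w)/∂t = φ(Φ_t(w))`. -/
structure IsContinuousSemigroupOnHalfPlane (Φ : ℝ → ℂ → ℂ) (φ : ℂ → ℂ) : Prop where
  mapsTo : ∀ t : ℝ, 0 ≤ t → Set.MapsTo (Φ t) rightHalfPlane rightHalfPlane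
  holomorphic : ∀ t : ℝ, 0 ≤ t → DifferentiableOn ℂ (Φ t) rightHalfPlane
  init : ∀ w ∈ rightHalfPlane, Φ 0 w = w
  semigroup : ∀ t s : ℝ, 0 ≤ t → 0 ≤ s → ∀ w ∈ rightHalfPlane, Φ (t + s) w = Φ t (Φ s w)
  gen_holomorphic : DifferentiableOn ℂ φ rightHalfPlane
  gen_re_nonneg : ∀ w ∈ rightHalfPlane, 0 ≤ (φ w).re
  ode : ∀ w ∈ rightHalfPlane, ∀ t : ℝ, 0 ≤ t →
    HasDerivWithinAt (fun s : ℝ => Φ s w) (φ (Φ t w)) (Set.Ici (0 : ℝ)) t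

/-- The semigroup has Denjoy–Wolff point at `∞`. -/
def HasDWPointInfty (Φ : ℝ → ℂ → ℂ) : Prop :=
  ∀ w ∈ rightHalfPlane, Tendsto (fun t : ℝ => ‖Φ t w‖) atTop atTop

/-- The filter of neighbourhoods of `∞` within a set `S ⊆ ℂ`:
`|w| → ∞` with `w ∈ S`. -/
def atInftyWithin (S : Set ℂ) : Filter ℂ :=
  Filter.comap (fun z : ℂ => ‖z‖) Filter.atTop ⊓ Filter.principal S

/-- `σ` solves `σ' = 1/φ` on the right half-plane with `σ 1 = 0`. -/
def IsSigmaFunction (φ σ : ℂ → ℂ) : Prop :=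
  (∀ w ∈ rightHalfPlane, HasDerivAt σ (1 / φ w) w) ∧ σ 1 = 0

open Asymptotics Bornology

section
variable {E : Type*} [NormedAddCommGroup E]

theorem MeasureTheory.LocallyIntegrableOn.intervalIntegrable_of_Ici {f : ℝ → E} {a b c : ℝ}
    (hf : LocallyIntegrableOn f (Ici a)) (hab : a ≤ b) (hbc : b ≤ c) :
    IntervalIntegrable f volume b c :=
  (intervalIntegrable_iff_integrableOn_Icc_of_le hbc).2 <|
    hf.integrableOn_compact_subset (fun _ hx => hab.trans hx.1) isCompact_Icc

theorem Asymptotics.IsLittleO.intervalIntegral_atTop [NormedSpace ℝ E] {f : ℝ → E} {k : ℝ → ℝ}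
    {a : ℝ} (hfk : f =o[atTop] k) (hf : LocallyIntegrableOn f (Ici a))
    (hk : LocallyIntegrableOn k (Ici a))
    (hk_nonneg : ∀ᶠ s in atTop, 0 ≤ k s)
    (hK : Tendsto (fun t => ∫ s in a..t, k s) atTop atTop) :
    (fun t => ∫ s in a..t, f s) =o[atTop] (fun t => ∫ s in a..t, k s) := by
  refine IsLittleO.of_bound fun ε hε => ?_
  obtain ⟨T, hT⟩ := eventually_atTop.1
    (((hfk.bound (half_pos hε)).and hk_nonneg).and (eventually_ge_atTop a))
  have haT : a ≤ T := (hT T le_rfl).2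
  filter_upwards [eventually_ge_atTop T,
    hK.eventually_ge_atTop (2 * (‖∫ s in a..T, f s‖ - ε / 2 * ∫ s in a..T, k s) / ε),
    hK.eventually_ge_atTop 0] with t hTt hCt hKt
  have htail : ‖∫ s in T..t, f s‖ ≤ ε / 2 * ∫ s in T..t, k s := by
    rw [← intervalIntegral.integral_const_mul]
    refine intervalIntegral.norm_integral_le_of_norm_le hTt (ae_of_all _ fun s hs => ?_)
      ((hk.intervalIntegrable_of_Ici haT hTt).const_mul _)
    obtain ⟨⟨hfs, hks⟩, -⟩ := hT s hs.1.le
    rwa [Real.norm_of_nonneg hks] at hfs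
  rw [div_le_iff₀ hε] at hCt
  rw [Real.norm_of_nonneg hKt, ← intervalIntegral.integral_add_adjacent_intervals
      (hf.intervalIntegrable_of_Ici le_rfl haT) (hf.intervalIntegrable_of_Ici haT hTt),
    ← intervalIntegral.integral_add_adjacent_intervals
      (hk.intervalIntegrable_of_Ici le_rfl haT) (hk.intervalIntegrable_of_Ici haT hTt)] at *
  calc _ ≤ ‖∫ s in a..T, f s‖ + ‖∫ s in T..t, f s‖ := norm_add_le _ _
    _ ≤ _ := by linarith
end

theorem integral_inv_add_one {t : ℝ} (ht : -1 < t) :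
    ∫ s in (0 : ℝ)..t, (s + 1)⁻¹ = Real.log (t + 1) := by
  rw [intervalIntegral.integral_comp_add_right (fun s => s⁻¹), zero_add,
    integral_inv (by rw [mem_uIcc]; rintro (⟨h, -⟩ | ⟨h, -⟩) <;> linarith), div_one]

theorem atInftyWithin_le_cobounded (S : Set ℂ) : atInftyWithin S ≤ cobounded ℂ :=
  inf_le_left.trans comap_norm_atTop.le

section
variable {l : Filter ℂ} {f : ℂ → ℂ} {β γ : ℂ}

theorem tendsto_mul_sub_of_tendsto_mul_sub_sub_div_add_one (hl : l ≤ cobounded ℂ)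
    (h : Tendsto (fun z => z * (f z - β - γ / (z + 1))) l (𝓝 0)) :
    Tendsto (fun z => z * (f z - β)) l (𝓝 γ) := by
  have hinv : Tendsto (fun z : ℂ => (z + 1)⁻¹) l (𝓝 0) :=
    tendsto_inv₀_cobounded.comp ((tendsto_add_const_cobounded 1).comp (tendsto_id.mono_left hl))
  have hlim := (h.add_const γ).sub (hinv.const_mul γ)
  rw [zero_add, mul_zero, sub_zero] at hlim
  refine hlim.congr' (((eventually_ne_cobounded (-1)).filter_mono hl).mono fun z hz => ?_)
  have : z + 1 ≠ 0 := fun h => hz (eq_neg_of_add_eq_zero_left h)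
  field_simp
  ring

theorem tendsto_of_tendsto_mul_sub (hl : l ≤ cobounded ℂ)
    (h : Tendsto (fun z => z * (f z - β)) l (𝓝 γ)) : Tendsto f l (𝓝 β) := by
  have hlim := ((tendsto_inv₀_cobounded.mono_left hl).mul h).const_add β
  rw [zero_mul, add_zero] at hlim
  refine hlim.congr' (((eventually_ne_cobounded 0).filter_mono hl).mono fun z hz => ?_)
  field_simp
  ring
end

namespace IsContinuousSemigroupOnHalfPlane

variable {Φ : ℝ → ℂ → ℂ} {φ : ℂ → ℂ} (hsg : IsContinuousSemigroupOnHalfPlane Φ φ)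
  {w : ℂ} (hw : w ∈ rightHalfPlane)
include hsg hw

theorem continuousOn_trajectory : ContinuousOn (fun t => Φ t w) (Ici 0) :=
  fun t ht => (hsg.ode w hw t ht).continuousWithinAt

theorem continuousOn_generator_trajectory : ContinuousOn (fun t => φ (Φ t w)) (Ici 0) :=
  hsg.gen_holomorphic.continuousOn.comp (hsg.continuousOn_trajectory hw)
    fun t ht => hsg.mapsTo t ht hw

theorem integral_generator_trajectory {t : ℝ} (ht : 0 ≤ t) :
    ∫ s in (0 : ℝ)..t, φ (Φ s w) = Φ t w - Φ 0 w :=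
  intervalIntegral.integral_eq_sub_of_hasDeriv_right_of_le ht
    ((hsg.continuousOn_trajectory hw).mono Icc_subset_Ici_self)
    (fun s hs => (hsg.ode w hw s hs.1.le).mono fun _ hr => hs.1.le.trans hr.le)
    (ContinuousOn.intervalIntegrable_of_Icc ht
      ((hsg.continuousOn_generator_trajectory hw).mono Icc_subset_Ici_self))

theorem tendsto_trajectory_atInftyWithin (hdw : HasDWPointInfty Φ) :
    Tendsto (fun t => Φ t w) atTop (atInftyWithin rightHalfPlane) :=
  tendsto_inf.2 ⟨tendsto_comap_iff.2 (hdw w hw),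
    tendsto_principal.2 (eventually_ge_atTop 0 |>.mono fun t ht => hsg.mapsTo t ht hw)⟩

end IsContinuousSemigroupOnHalfPlane

section
variable {u F : ℝ → ℂ} {β γ : ℂ}

theorem tendsto_div_of_integral_eq_sub (hF : ContinuousOn F (Ici 0))
    (hu : ∀ t ≥ 0, ∫ s in (0 : ℝ)..t, F s = u t - u 0) (hFβ : Tendsto F atTop (𝓝 β)) :
    Tendsto (fun t : ℝ => u t / t) atTop (𝓝 β) := by
  have hFβ' : (fun s => F s - β) =o[atTop] (fun _ => (1 : ℝ)) :=
    (isLittleO_one_iff ℝ).2 (by simpa using hFβ.sub_const β)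
  have hint := hFβ'.intervalIntegral_atTop (a := 0)
    ((hF.sub continuousOn_const).locallyIntegrableOn measurableSet_Ici)
    (continuousOn_const.locallyIntegrableOn measurableSet_Ici) (.of_forall fun _ => zero_le_one)
    (by simp only [intervalIntegral.integral_const, sub_zero, smul_eq_mul, mul_one]
        exact tendsto_id)
  simp only [intervalIntegral.integral_const, sub_zero, smul_eq_mul, mul_one] at hint
  have hu0 : (fun _ => u 0) =o[atTop] (fun t : ℝ => t) :=
    isLittleO_const_left.2 (.inr tendsto_norm_atTop_atTop)
  have hlin : (fun t => u t - β * t) =o[atTop] (fun t : ℝ => (t : ℂ)) := by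
    refine isLittleO_ofReal_right.2 ((hint.add hu0).congr' ?_ .rfl)
    filter_upwards [eventually_ge_atTop 0] with t ht
    rw [intervalIntegral.integral_sub
      ((hF.mono Icc_subset_Ici_self).intervalIntegrable_of_Icc ht) intervalIntegrable_const,
      hu t ht, intervalIntegral.integral_const, sub_zero, Complex.real_smul]
    ring
  have hlim := hlin.tendsto_div_nhds_zero.add_const β
  rw [zero_add] at hlim
  refine hlim.congr' ?_
  filter_upwards [eventually_gt_atTop 0] with t ht
  have : (t : ℂ) ≠ 0 := by exact_mod_cast ht.ne'
  field_simp
  ring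

theorem tendsto_add_one_mul_sub (hβ : β ≠ 0) (hlin : Tendsto (fun t : ℝ => u t / t) atTop (𝓝 β))
    (hFβ : Tendsto F atTop (𝓝 β)) (huF : Tendsto (fun t => u t * (F t - β)) atTop (𝓝 γ)) :
    Tendsto (fun t : ℝ => ((t : ℂ) + 1) * (F t - β)) atTop (𝓝 (γ / β)) := by
  have hlim := ((hlin.inv₀ hβ).mul huF).add (hFβ.sub_const β)
  rw [sub_self, add_zero, inv_mul_eq_div] at hlim
  refine hlim.congr' ?_
  filter_upwards [hlin.eventually_ne hβ, eventually_ne_atTop 0] with t hut ht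
  have hu : u t ≠ 0 := fun h => hut (by simp [h])
  have : (t : ℂ) ≠ 0 := by exact_mod_cast ht
  field_simp

theorem tendsto_sub_linear_sub_log_div_log (hβ : β ≠ 0) (hF : ContinuousOn F (Ici 0))
    (hu : ∀ t ≥ 0, ∫ s in (0 : ℝ)..t, F s = u t - u 0) (hFβ : Tendsto F atTop (𝓝 β))
    (huF : Tendsto (fun t => u t * (F t - β)) atTop (𝓝 γ)) :
    Tendsto (fun t : ℝ =>
      (u t - β * t - γ / β * (Real.log (t + 1) : ℂ)) / (Real.log (t + 1) : ℂ)) atTop (𝓝 0) := by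
  have hg := (tendsto_add_one_mul_sub hβ (tendsto_div_of_integral_eq_sub hF hu hFβ) hFβ
    huF).sub_const (γ / β)
  rw [sub_self] at hg
  set k : ℝ → ℝ := fun s => (s + 1)⁻¹
  have hk : ContinuousOn k (Ici 0) :=
    (continuousOn_id.add continuousOn_const).inv₀ fun s (hs : 0 ≤ s) => (by linarith : s + 1 ≠ 0)
  have hlittle : (fun s => F s - β - γ / β * (k s : ℂ)) =o[atTop] k := by
    have := ((isLittleO_one_iff ℝ).2 hg).mul_isBigO (isBigO_ofReal_left.2 (isBigO_refl k atTop))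
    simp only [one_mul] at this
    refine this.congr' ?_ .rfl
    filter_upwards [eventually_ge_atTop 0] with s hs
    have : (s : ℂ) + 1 ≠ 0 := by exact_mod_cast (by linarith : s + 1 ≠ 0)
    simp only [k]
    push_cast
    field_simp
  have hK : ∀ t ≥ (0 : ℝ), ∫ s in (0 : ℝ)..t, k s = Real.log (t + 1) :=
    fun t ht => integral_inv_add_one (by linarith)
  have hlog : Tendsto (fun t : ℝ => Real.log (t + 1)) atTop atTop :=
    Real.tendsto_log_atTop.comp (tendsto_atTop_add_const_right _ 1 tendsto_id)
  have hint := (hlittle.intervalIntegral_atTop (a := 0)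
    (((hF.sub continuousOn_const).sub ((continuous_ofReal.comp_continuousOn hk).const_smul
      (γ / β))).locallyIntegrableOn measurableSet_Ici)
    (hk.locallyIntegrableOn measurableSet_Ici)
    ((eventually_ge_atTop 0).mono fun s hs => inv_nonneg.2 (by linarith))
    (hlog.congr' ((eventually_ge_atTop 0).mono fun t ht => (hK t ht).symm))).congr' .rfl
    ((eventually_ge_atTop 0).mono hK)
  have hu0 : (fun _ => u 0) =o[atTop] (fun t : ℝ => Real.log (t + 1)) :=
    isLittleO_const_left.2 (.inr (tendsto_norm_atTop_atTop.comp hlog))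
  refine (isLittleO_ofReal_right.2 ((hint.add hu0).congr' ?_ .rfl)).tendsto_div_nhds_zero
  filter_upwards [eventually_ge_atTop 0] with t ht
  have hkt : IntervalIntegrable (fun s => (k s : ℂ)) volume 0 t :=
    ((continuous_ofReal.comp_continuousOn hk).mono Icc_subset_Ici_self).intervalIntegrable_of_Icc
      ht
  rw [intervalIntegral.integral_sub
    (((hF.mono Icc_subset_Ici_self).intervalIntegrable_of_Icc ht).sub intervalIntegrable_const)
    (hkt.const_mul _), intervalIntegral.integral_sub
    ((hF.mono Icc_subset_Ici_self).intervalIntegrable_of_Icc ht) intervalIntegrable_const,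
    intervalIntegral.integral_const_mul, intervalIntegral.integral_ofReal, hK t ht, hu t ht,
    intervalIntegral.integral_const, sub_zero, Complex.real_smul]
  ring
end

theorem stmt14 (Φ : ℝ → ℂ → ℂ) (φ : ℂ → ℂ) (β γ : ℂ)
    (hsg : IsContinuousSemigroupOnHalfPlane Φ φ)
    (hdw : HasDWPointInfty Φ)
    (hβ : β ≠ 0)
    (hrep : Tendsto (fun w : ℂ => w * (φ w - β - γ / (w + 1)))
      (atInftyWithin rightHalfPlane) (𝓝 0)) :
    ∀ w ∈ rightHalfPlane,
      Tendsto (fun t : ℝ =>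
          (Φ t w - β * (t : ℂ) - (γ / β) * (Real.log (t + 1) : ℂ)) /
            (Real.log (t + 1) : ℂ)) atTop (𝓝 0) := by
  intro w hw
  have hl := atInftyWithin_le_cobounded rightHalfPlane
  have hφ := tendsto_mul_sub_of_tendsto_mul_sub_sub_div_add_one hl hrep
  have htraj := hsg.tendsto_trajectory_atInftyWithin hw hdw
  exact tendsto_sub_linear_sub_log_div_log hβ (hsg.continuousOn_generator_trajectory hw)
    (fun t ht => hsg.integral_generator_trajectory hw ht)
    ((tendsto_of_tendsto_mul_sub hl hφ).comp htraj) (hφ.comp htraj)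
end
end

section
/- Let (Φ_t)_{t≥0} be a continuous one-parameter semigroup on the right half-plane Π with Denjoy–Wolff point at ∞, generated by −φ, where φ has no zeros in Π and admits the representation φ(w) = β + γ/(w+1) + ϱ₁(w) with β, γ ∈ ℂ, β ≠ 0, and w^{1+ε}·ϱ₁(w) → 0 as |w| → ∞, w ∈ Π, for some ε > 0. Let σ be the holomorphic function with σ'(w) = 1/φ(w), σ(1) = 0. Then there exists a constant A ∈ ℂ, independent of w, such that for every w ∈ Π, lim_{t→∞} ( Φ_t(w) − βt − (γ/β)·log(t+1) − β·σ(w) ) = A. -/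
open Complex Filter Topology Set MeasureTheory

noncomputable section

/-
Put `h(w) = w - β σ(w) - (γ/β) log(w + 1)` (`abelRemainder β γ σ`). Since `σ' = 1/φ` and
`φ(w) = β + γ/(w + 1) + O(|w|^(-1-ε))`, the derivative `h'(w)` is `O(|w|^(-min(2, 1+ε)))`, which is
integrable towards `∞`; integrating first along the positive real axis and then along circular arcs
shows that `h` has a limit `A` at `∞` in `Π`. Along a trajectory the Abel equation
`σ(Φ_t w) = σ(w) + t` gives
`Φ_t w - βt - (γ/β) log(t + 1) - β σ(w) = h(Φ_t w) + (γ/β) log((Φ_t w + 1)/(t + 1))`,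
and `(Φ_t w + 1)/(t + 1) → β` because `∂Φ_t w/∂t = φ(Φ_t w) → β`. The limit is `A + (γ/β) log β`.
-/

open scoped Real
open Asymptotics

lemma eventually_atInftyWithin_iff {S : Set ℂ} {p : ℂ → Prop} :
    (∀ᶠ v in atInftyWithin S, p v) ↔ ∃ R : ℝ, ∀ v ∈ S, R ≤ ‖v‖ → p v := by
  simp only [atInftyWithin, eventually_inf_principal, eventually_comap, eventually_atTop]
  constructor
  · rintro ⟨R, hR⟩
    exact ⟨R, fun v hv hRv => hR _ hRv v rfl hv⟩
  · rintro ⟨R, hR⟩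
    exact ⟨R, fun r hr v hv hvS => hR v hvS (hv ▸ hr)⟩

lemma eventually_mem_atInftyWithin (S : Set ℂ) : ∀ᶠ v in atInftyWithin S, v ∈ S :=
  mem_inf_of_right (mem_principal_self S)

lemma tendsto_norm_atInftyWithin (S : Set ℂ) :
    Tendsto (fun v : ℂ => ‖v‖) (atInftyWithin S) atTop :=
  tendsto_comap.mono_left inf_le_left

lemma tendsto_atInftyWithin_iff {α : Type*} {l : Filter α} {F : α → ℂ} {S : Set ℂ} :
    Tendsto F l (atInftyWithin S) ↔
      Tendsto (fun x => ‖F x‖) l atTop ∧ ∀ᶠ x in l, F x ∈ S := by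
  rw [atInftyWithin, tendsto_inf, tendsto_comap_iff, tendsto_principal]
  rfl

lemma isBigO_norm_rpow_neg_of_le {S : Set ℂ} {p q : ℝ} (hpq : p ≤ q) :
    (fun v : ℂ => ‖v‖ ^ (-q)) =O[atInftyWithin S] fun v => ‖v‖ ^ (-p) := by
  refine IsBigO.of_bound' ?_
  filter_upwards [(tendsto_norm_atInftyWithin S).eventually_ge_atTop 1] with v hv
  rw [Real.norm_of_nonneg (by positivity), Real.norm_of_nonneg (by positivity)]
  exact Real.rpow_le_rpow_of_exponent_le hv (by linarith)

lemma isBigO_norm_rpow_neg_of_tendsto_cpow_mul {S : Set ℂ} {g : ℂ → ℂ} {s : ℝ}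
    (hg : Tendsto (fun w => w ^ (s : ℂ) * g w) (atInftyWithin S) (𝓝 0)) :
    g =O[atInftyWithin S] fun w => ‖w‖ ^ (-s) := by
  refine IsBigO.of_bound 1 ?_
  filter_upwards [(tendsto_norm_atInftyWithin S).eventually_gt_atTop 0,
    hg.eventually (Metric.closedBall_mem_nhds 0 one_pos)] with w hw0 hw1
  rw [dist_zero_right, norm_mul, norm_cpow_real] at hw1
  rw [Real.norm_of_nonneg (by positivity), Real.rpow_neg hw0.le, one_mul, ← one_div,
    le_div_iff₀ (by positivity)]
  linarith

lemma norm_le_norm_add_one {v : ℂ} (hv : v ∈ rightHalfPlane) : ‖v‖ ≤ ‖v + 1‖ := by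
  have hv : 0 < v.re := hv
  rw [Complex.norm_def, Complex.norm_def]
  apply Real.sqrt_le_sqrt
  simp only [Complex.normSq_apply, Complex.add_re, Complex.add_im, Complex.one_re, Complex.one_im]
  nlinarith

lemma add_one_mem_slitPlane {v : ℂ} (hv : v ∈ rightHalfPlane) : v + 1 ∈ slitPlane := by
  have hv : 0 < v.re := hv
  left
  simp only [add_re, one_re]
  linarith

lemma ofReal_mem_rightHalfPlane {x : ℝ} (hx : 0 < x) : (x : ℂ) ∈ rightHalfPlane := by
  simpa [rightHalfPlane] using hx

lemma isOpen_rightHalfPlane : IsOpen rightHalfPlane :=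
  isOpen_lt continuous_const continuous_re

lemma isBigO_inv_add_one :
    (fun w : ℂ => (w + 1)⁻¹) =O[atInftyWithin rightHalfPlane] fun w => ‖w‖ ^ (-1 : ℝ) := by
  refine IsBigO.of_bound 1 ?_
  filter_upwards [(tendsto_norm_atInftyWithin _).eventually_gt_atTop 0,
    eventually_mem_atInftyWithin _] with w hw0 hw
  rw [Real.norm_of_nonneg (by positivity), Real.rpow_neg_one, one_mul, norm_inv]
  exact inv_anti₀ hw0 (norm_le_norm_add_one hw)

lemma log_div_ofReal {x : ℂ} (hx : x ≠ 0) {r : ℝ} (hr : 0 < r) :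
    log (x / r) = log x - Real.log r := by
  have hr' : (r : ℂ) ≠ 0 := ofReal_ne_zero.2 hr.ne'
  have h := log_ofReal_mul hr (div_ne_zero hx hr')
  rw [mul_div_cancel₀ _ hr'] at h
  rw [h]
  ring

section LimitAtInfinity

variable {E : Type*} [NormedAddCommGroup E] [NormedSpace ℂ E] {f : ℂ → E}

lemma norm_sub_apply_norm_le (hf : DifferentiableOn ℂ f rightHalfPlane) {v : ℂ}
    (hv : v ∈ rightHalfPlane) {M : ℝ}
    (hM : ∀ u ∈ rightHalfPlane, ‖u‖ = ‖v‖ → ‖deriv f u‖ ≤ M) :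
    ‖f v - f ‖v‖‖ ≤ π / 2 * ‖v‖ * M := by
  set r := ‖v‖
  set arc : ℝ → ℂ := fun θ => r * exp (θ * I)
  have harc_mem : ∀ θ ∈ Ioo (-(π / 2)) (π / 2), arc θ ∈ rightHalfPlane ∧ ‖arc θ‖ = r := by
    intro θ hθ
    have hr : 0 < r := norm_pos_iff.2 (fun h => by simp [rightHalfPlane, h] at hv)
    refine ⟨?_, by simp [arc, abs_of_pos hr]⟩
    show 0 < (arc θ).re
    simpa [arc, exp_ofReal_mul_I_re] using mul_pos hr (Real.cos_pos_of_mem_Ioo hθ)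
  have hderiv : ∀ θ ∈ Ioo (-(π / 2)) (π / 2), HasDerivWithinAt (fun θ => f (arc θ))
      ((arc θ * I) • deriv f (arc θ)) (Ioo (-(π / 2)) (π / 2)) θ := by
    intro θ hθ
    have harc : HasDerivAt arc (arc θ * I) θ := by
      have := (((hasDerivAt_id (θ : ℂ)).mul_const I).cexp.comp_ofReal).const_mul (r : ℂ)
      simpa [arc, mul_assoc] using this
    have hfθ := hf.differentiableAt (isOpen_rightHalfPlane.mem_nhds (harc_mem θ hθ).1)
    exact (hfθ.hasDerivAt.scomp θ harc).hasDerivWithinAt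
  have hbound : ∀ θ ∈ Ioo (-(π / 2)) (π / 2), ‖(arc θ * I) • deriv f (arc θ)‖ ≤ r * M := by
    intro θ hθ
    obtain ⟨hmem, hnorm⟩ := harc_mem θ hθ
    rw [norm_smul, norm_mul, norm_I, mul_one, hnorm]
    exact mul_le_mul_of_nonneg_left (hM _ hmem hnorm) (norm_nonneg v)
  have harg : arg v ∈ Ioo (-(π / 2)) (π / 2) :=
    abs_lt.1 (abs_arg_lt_pi_div_two_iff.2 (Or.inl hv))
  have h0 : (0 : ℝ) ∈ Ioo (-(π / 2)) (π / 2) := by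
    constructor <;> linarith [Real.pi_pos]
  have hmv := (convex_Ioo _ _).norm_image_sub_le_of_norm_hasDerivWithin_le hderiv hbound h0 harg
  have hv_arc : arc (arg v) = v := norm_mul_exp_arg_mul_I v
  have h0_arc : arc 0 = r := by simp [arc]
  rw [hv_arc, h0_arc, sub_zero, Real.norm_eq_abs] at hmv
  calc ‖f v - f r‖ ≤ r * M * |arg v| := hmv
    _ ≤ r * M * (π / 2) := by
        have hM0 : 0 ≤ M := le_trans (norm_nonneg _) (hM v hv rfl)
        exact mul_le_mul_of_nonneg_left (abs_lt.2 harg).le (by positivity)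
    _ = π / 2 * r * M := by ring

lemma exists_tendsto_ofReal_atTop [CompleteSpace E] {p C R : ℝ} (hp : 1 < p) (hR : 0 < R)
    (hf : DifferentiableOn ℂ f rightHalfPlane)
    (hbound : ∀ v ∈ rightHalfPlane, R ≤ ‖v‖ → ‖deriv f v‖ ≤ C * ‖v‖ ^ (-p)) :
    ∃ A, Tendsto (fun x : ℝ => f x) atTop (𝓝 A) := by
  have hmem : ∀ x ∈ Ioi R, (x : ℂ) ∈ rightHalfPlane ∧ R ≤ ‖(x : ℂ)‖ := fun x hx =>
    ⟨ofReal_mem_rightHalfPlane (hR.trans hx), by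
      rw [norm_real, Real.norm_of_nonneg (hR.trans hx).le]; exact le_of_lt hx⟩
  have hderiv : ∀ x ∈ Ioi R, HasDerivAt (fun x : ℝ => f x) (deriv f x) x := fun x hx => by
    have hfx := hf.differentiableAt (isOpen_rightHalfPlane.mem_nhds (hmem x hx).1)
    have := hfx.hasDerivAt.scomp x (hasDerivAt_id x).ofReal_comp
    rwa [ofReal_one, one_smul] at this
  have hcont : ContinuousOn (fun x : ℝ => deriv f x) (Ioi R) :=
    ((hf.deriv isOpen_rightHalfPlane).continuousOn).comp continuous_ofReal.continuousOn
      fun x hx => (hmem x hx).1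
  have hint : IntegrableOn (fun x : ℝ => deriv f x) (Ioi R) := by
    refine Integrable.mono' ((integrableOn_Ioi_rpow_of_lt (by linarith : -p < -1) hR).const_mul C)
      (hcont.aestronglyMeasurable measurableSet_Ioi) ?_
    filter_upwards [ae_restrict_mem measurableSet_Ioi] with x hx
    simpa [Real.norm_of_nonneg (hR.trans hx).le] using hbound x (hmem x hx).1 (hmem x hx).2
  exact ⟨_, tendsto_limUnder_of_hasDerivAt_of_integrableOn_Ioi hderiv hint⟩

theorem exists_tendsto_atInftyWithin_of_isBigO_deriv [CompleteSpace E] {p : ℝ} (hp : 1 < p)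
    (hf : DifferentiableOn ℂ f rightHalfPlane)
    (hf' : deriv f =O[atInftyWithin rightHalfPlane] fun v => ‖v‖ ^ (-p)) :
    ∃ A, Tendsto f (atInftyWithin rightHalfPlane) (𝓝 A) := by
  obtain ⟨C, hC⟩ := hf'.bound
  obtain ⟨R, hR⟩ := eventually_atInftyWithin_iff.1 hC
  have hbound : ∀ v ∈ rightHalfPlane, max R 1 ≤ ‖v‖ → ‖deriv f v‖ ≤ C * ‖v‖ ^ (-p) :=
    fun v hv hRv => by
      simpa [Real.norm_of_nonneg (Real.rpow_nonneg (norm_nonneg v) _)] using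
        hR v hv ((le_max_left R 1).trans hRv)
  obtain ⟨A, hA⟩ := exists_tendsto_ofReal_atTop hp (by positivity) hf hbound
  have hnorm := tendsto_norm_atInftyWithin rightHalfPlane
  have hdecay : Tendsto (fun v : ℂ => π / 2 * C * ‖v‖ ^ (1 - p)) (atInftyWithin rightHalfPlane)
      (𝓝 0) := by
    have h := (tendsto_rpow_neg_atTop (by linarith : 0 < p - 1)).const_mul (π / 2 * C)
    rw [mul_zero, neg_sub] at h
    exact h.comp hnorm
  have harc : Tendsto (fun v => f v - f ‖v‖) (atInftyWithin rightHalfPlane) (𝓝 0) := by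
    refine squeeze_zero_norm' ?_ hdecay
    filter_upwards [eventually_mem_atInftyWithin _, hnorm.eventually_ge_atTop (max R 1)]
      with v hv hRv
    have hv0 : 0 < ‖v‖ := lt_of_lt_of_le one_pos ((le_max_right R 1).trans hRv)
    calc ‖f v - f ‖v‖‖ ≤ π / 2 * ‖v‖ * (C * ‖v‖ ^ (-p)) :=
          norm_sub_apply_norm_le hf hv fun u hu huv => by
            simpa only [huv] using hbound u hu (huv ▸ hRv)
      _ = π / 2 * C * ‖v‖ ^ (1 - p) := by
          rw [sub_eq_add_neg, Real.rpow_add hv0, Real.rpow_one]; ring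
  exact ⟨A, by simpa using harc.add (hA.comp hnorm)⟩

end LimitAtInfinity

lemma isLittleO_atTop_of_tendsto_deriv_zero {E : Type*} [NormedAddCommGroup E] [NormedSpace ℝ E]
    {f f' : ℝ → E} {a : ℝ} (hf : ∀ t, a ≤ t → HasDerivWithinAt f (f' t) (Ici a) t)
    (hf' : Tendsto f' atTop (𝓝 0)) :
    f =o[atTop] fun t => t := by
  refine isLittleO_iff.2 fun c hc => ?_
  obtain ⟨S, hS⟩ := eventually_atTop.1 (hf'.eventually (Metric.closedBall_mem_nhds 0 (half_pos hc)))
  set S' := max S a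
  have hmv : ∀ t, S' ≤ t → ‖f t - f S'‖ ≤ c / 2 * ‖t - S'‖ := fun t ht =>
    (convex_Ici S').norm_image_sub_le_of_norm_hasDerivWithin_le
      (fun x hx => (hf x ((le_max_right S a).trans hx)).mono (Ici_subset_Ici.2 (le_max_right S a)))
      (fun x hx => by simpa using hS x ((le_max_left S a).trans hx)) self_mem_Ici ht
  filter_upwards [eventually_ge_atTop S', eventually_ge_atTop 0,
    (tendsto_id.const_mul_atTop (half_pos hc)).eventually_ge_atTop (‖f S'‖ - c / 2 * S')]
    with t hS't ht0 hlarge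
  rw [id_eq] at hlarge
  have h := hmv t hS't
  rw [Real.norm_of_nonneg (sub_nonneg.2 hS't)] at h
  rw [Real.norm_of_nonneg ht0]
  linarith [norm_le_norm_add_norm_sub' (f t) (f S')]

lemma tendsto_add_one_div_of_tendsto_deriv {F F' : ℝ → ℂ} {β : ℂ}
    (hF : ∀ t, 0 ≤ t → HasDerivWithinAt F (F' t) (Ici 0) t) (hF' : Tendsto F' atTop (𝓝 β)) :
    Tendsto (fun t : ℝ => (F t + 1) / ((t : ℂ) + 1)) atTop (𝓝 β) := by
  have hG : (fun t : ℝ => F t + 1 - β * ((t : ℂ) + 1)) =o[atTop] fun t => t := by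
    refine isLittleO_atTop_of_tendsto_deriv_zero (f' := fun t => F' t - β) (a := 0)
      (fun t ht => ?_) (by simpa using hF'.sub_const β)
    have hlin := ((hasDerivAt_id t).ofReal_comp.add_const (1 : ℂ)).const_mul β
    exact (((hF t ht).add_const 1).sub hlin.hasDerivWithinAt).congr_deriv (by simp)
  have hG' : (fun t : ℝ => F t + 1 - β * ((t : ℂ) + 1)) =o[atTop] fun t : ℝ => (t : ℂ) + 1 := by
    refine hG.trans_isBigO (IsBigO.of_bound 1 ?_)
    filter_upwards [eventually_ge_atTop 0] with t ht
    rw [one_mul, Real.norm_of_nonneg ht, ← ofReal_one, ← ofReal_add, norm_real,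
      Real.norm_of_nonneg (by linarith)]
    linarith
  have h := hG'.tendsto_div_nhds_zero.add_const β
  rw [zero_add] at h
  refine h.congr' ?_
  filter_upwards [eventually_ge_atTop 0] with t ht
  have ht1 : (t : ℂ) + 1 ≠ 0 := by
    rw [← ofReal_one, ← ofReal_add, ofReal_ne_zero]; linarith
  field_simp
  ring

section Generator

variable {φ σ : ℂ → ℂ} {β γ : ℂ} {ε : ℝ}

lemma isBigO_generator_sub (hε : 0 < ε)
    (hrep : Tendsto (fun w : ℂ => w ^ ((1 + ε : ℝ) : ℂ) * (φ w - β - γ / (w + 1)))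
      (atInftyWithin rightHalfPlane) (𝓝 0)) :
    (fun w => φ w - β) =O[atInftyWithin rightHalfPlane] fun w => ‖w‖ ^ (-1 : ℝ) := by
  have hρ := (isBigO_norm_rpow_neg_of_tendsto_cpow_mul hrep).trans
    (isBigO_norm_rpow_neg_of_le (by linarith : (1 : ℝ) ≤ 1 + ε))
  simpa [div_eq_mul_inv] using (isBigO_inv_add_one.const_mul_left γ).add hρ

lemma tendsto_generator_atInftyWithin (hε : 0 < ε)
    (hrep : Tendsto (fun w : ℂ => w ^ ((1 + ε : ℝ) : ℂ) * (φ w - β - γ / (w + 1)))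
      (atInftyWithin rightHalfPlane) (𝓝 0)) :
    Tendsto φ (atInftyWithin rightHalfPlane) (𝓝 β) := by
  have h := (isBigO_generator_sub hε hrep).trans_tendsto
    ((tendsto_rpow_neg_atTop one_pos).comp (tendsto_norm_atInftyWithin _))
  simpa using h.add_const β

def abelRemainder (β γ : ℂ) (σ : ℂ → ℂ) (w : ℂ) : ℂ :=
  w - β * σ w - γ / β * log (w + 1)

lemma hasDerivAt_abelRemainder {v : ℂ} (hv : v ∈ rightHalfPlane)
    (hσ : HasDerivAt σ (1 / φ v) v) :
    HasDerivAt (abelRemainder β γ σ) (1 - β * (1 / φ v) - γ / β * (v + 1)⁻¹) v := by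
  have hlog := (hasDerivAt_log (add_one_mem_slitPlane hv)).comp v ((hasDerivAt_id v).add_const 1)
  refine (((hasDerivAt_id v).sub (hσ.const_mul β)).sub (hlog.const_mul (γ / β))).congr_deriv ?_
  simp

lemma isBigO_deriv_abelRemainder (hβ : β ≠ 0) (hε : 0 < ε)
    (hσ : ∀ w ∈ rightHalfPlane, HasDerivAt σ (1 / φ w) w)
    (hrep : Tendsto (fun w : ℂ => w ^ ((1 + ε : ℝ) : ℂ) * (φ w - β - γ / (w + 1)))
      (atInftyWithin rightHalfPlane) (𝓝 0)) :
    deriv (abelRemainder β γ σ) =O[atInftyWithin rightHalfPlane]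
      fun w => ‖w‖ ^ (-min 2 (1 + ε)) := by
  have hinv : (fun w => (φ w)⁻¹) =O[atInftyWithin rightHalfPlane] (fun _ => (1 : ℝ)) :=
    ((tendsto_generator_atInftyWithin hε hrep).inv₀ hβ).isBigO_one ℝ
  -- Eventually `deriv h = γ/β (β - φ) (w + 1)⁻¹ φ⁻¹ + (φ - β - γ/(w + 1)) φ⁻¹`: the `γ/(w + 1)`
  -- part of `φ` cancels the derivative of the logarithm.
  have hmain : (fun w => γ / β * (β - φ w) * (w + 1)⁻¹ * (φ w)⁻¹)
      =O[atInftyWithin rightHalfPlane] fun w => ‖w‖ ^ (-1 : ℝ) * ‖w‖ ^ (-1 : ℝ) * 1 :=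
    ((((isBigO_generator_sub hε hrep).neg_left.const_mul_left (γ / β)).mul
      isBigO_inv_add_one).mul hinv).congr_left fun w => by ring
  have hrem : (fun w => (φ w - β - γ / (w + 1)) * (φ w)⁻¹)
      =O[atInftyWithin rightHalfPlane] fun w => ‖w‖ ^ (-(1 + ε)) * 1 :=
    (isBigO_norm_rpow_neg_of_tendsto_cpow_mul hrep).mul hinv
  have hsq : (fun w : ℂ => ‖w‖ ^ (-1 : ℝ) * ‖w‖ ^ (-1 : ℝ) * 1)
      =ᶠ[atInftyWithin rightHalfPlane] fun w => ‖w‖ ^ (-2 : ℝ) := by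
    filter_upwards [(tendsto_norm_atInftyWithin _).eventually_gt_atTop 0] with w hw
    rw [mul_one, ← Real.rpow_add hw]; norm_num
  refine ((hmain.trans_eventuallyEq hsq).trans (isBigO_norm_rpow_neg_of_le (min_le_left _ _))).add
    ((hrem.congr_right fun w => mul_one _).trans
      (isBigO_norm_rpow_neg_of_le (min_le_right _ _))) |>.congr' ?_ EventuallyEq.rfl
  filter_upwards [eventually_mem_atInftyWithin _,
    (tendsto_generator_atInftyWithin hε hrep).eventually_ne hβ] with w hw hφw
  rw [(hasDerivAt_abelRemainder hw (hσ w hw)).deriv]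
  have hw1 : w + 1 ≠ 0 := slitPlane_ne_zero (add_one_mem_slitPlane hw)
  field_simp
  ring

lemma exists_tendsto_abelRemainder (hβ : β ≠ 0) (hε : 0 < ε)
    (hσ : ∀ w ∈ rightHalfPlane, HasDerivAt σ (1 / φ w) w)
    (hrep : Tendsto (fun w : ℂ => w ^ ((1 + ε : ℝ) : ℂ) * (φ w - β - γ / (w + 1)))
      (atInftyWithin rightHalfPlane) (𝓝 0)) :
    ∃ A, Tendsto (abelRemainder β γ σ) (atInftyWithin rightHalfPlane) (𝓝 A) :=
  exists_tendsto_atInftyWithin_of_isBigO_deriv (lt_min one_lt_two (by linarith))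
    (fun w hw => (hasDerivAt_abelRemainder hw (hσ w hw)).differentiableAt.differentiableWithinAt)
    (isBigO_deriv_abelRemainder hβ hε hσ hrep)

end Generator

section Trajectory

variable {Φ : ℝ → ℂ → ℂ} {φ σ : ℂ → ℂ}

lemma tendsto_trajectory_atInftyWithin (hsg : IsContinuousSemigroupOnHalfPlane Φ φ)
    (hdw : HasDWPointInfty Φ) {w : ℂ} (hw : w ∈ rightHalfPlane) :
    Tendsto (fun t => Φ t w) atTop (atInftyWithin rightHalfPlane) :=
  tendsto_atInftyWithin_iff.2 ⟨hdw w hw, by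
    filter_upwards [eventually_ge_atTop 0] with t ht using hsg.mapsTo t ht hw⟩

lemma sigma_trajectory_eq_add (hsg : IsContinuousSemigroupOnHalfPlane Φ φ)
    (hnz : ∀ w ∈ rightHalfPlane, φ w ≠ 0)
    (hσ : ∀ w ∈ rightHalfPlane, HasDerivAt σ (1 / φ w) w)
    {w : ℂ} (hw : w ∈ rightHalfPlane) {t : ℝ} (ht : 0 ≤ t) :
    σ (Φ t w) = σ w + t := by
  have hderiv : ∀ s ∈ Ici (0 : ℝ),
      HasDerivWithinAt (fun s : ℝ => σ (Φ s w) - s) 0 (Ici 0) s := fun s hs => by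
    have hmem := hsg.mapsTo s hs hw
    have h := ((hσ _ hmem).comp_hasDerivWithinAt s (hsg.ode w hw s hs)).sub
      (hasDerivAt_id s).ofReal_comp.hasDerivWithinAt
    rwa [one_div, inv_mul_cancel₀ (hnz _ hmem), ofReal_one, sub_self] at h
  have h := (convex_Ici (0 : ℝ)).norm_image_sub_le_of_norm_hasDerivWithin_le hderiv
    (fun _ _ => le_of_eq norm_zero) self_mem_Ici ht
  rw [zero_mul, norm_le_zero_iff, sub_eq_zero, hsg.init w hw] at h
  simpa [sub_eq_iff_eq_add] using h

lemma mem_slitPlane_of_tendsto_generator (hsg : IsContinuousSemigroupOnHalfPlane Φ φ)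
    (hdw : HasDWPointInfty Φ) {β : ℂ} (hβ : β ≠ 0)
    (hφ : Tendsto φ (atInftyWithin rightHalfPlane) (𝓝 β)) :
    β ∈ slitPlane := by
  have h1 : (1 : ℂ) ∈ rightHalfPlane := ofReal_one ▸ ofReal_mem_rightHalfPlane one_pos
  have hre : 0 ≤ β.re := by
    refine ge_of_tendsto ((continuous_re.tendsto β).comp
      (hφ.comp (tendsto_trajectory_atInftyWithin hsg hdw h1))) ?_
    filter_upwards [eventually_ge_atTop 0] with t ht
    exact hsg.gen_re_nonneg _ (hsg.mapsTo t ht h1)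
  rw [mem_slitPlane_iff_not_le_zero]
  intro hle
  exact hβ (ext (le_antisymm (le_def.1 hle).1 hre) (le_def.1 hle).2)

end Trajectory

theorem stmt16 (Φ : ℝ → ℂ → ℂ) (φ σ : ℂ → ℂ) (β γ : ℂ) (ε : ℝ)
    (hsg : IsContinuousSemigroupOnHalfPlane Φ φ)
    (hdw : HasDWPointInfty Φ)
    (hnz : ∀ w ∈ rightHalfPlane, φ w ≠ 0)
    (hβ : β ≠ 0) (hε : 0 < ε)
    (hrep : Tendsto (fun w : ℂ => w ^ ((1 + ε : ℝ) : ℂ) * (φ w - β - γ / (w + 1)))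
      (atInftyWithin rightHalfPlane) (𝓝 0))
    (hσ : IsSigmaFunction φ σ) :
    ∃ A : ℂ, ∀ w ∈ rightHalfPlane,
      Tendsto (fun t : ℝ =>
          Φ t w - β * (t : ℂ) - (γ / β) * (Real.log (t + 1) : ℂ) - β * σ w) atTop
        (𝓝 A) := by
  obtain ⟨hσ', -⟩ := hσ
  have hφ := tendsto_generator_atInftyWithin hε hrep
  have hβ_slit := mem_slitPlane_of_tendsto_generator hsg hdw hβ hφ
  obtain ⟨A, hA⟩ := exists_tendsto_abelRemainder hβ hε hσ' hrep
  refine ⟨A + γ / β * log β, fun w hw => ?_⟩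
  have hF := tendsto_trajectory_atInftyWithin hsg hdw hw
  have hgrowth := tendsto_add_one_div_of_tendsto_deriv (hsg.ode w hw) (hφ.comp hF)
  refine ((hA.comp hF).add ((hgrowth.clog hβ_slit).const_mul (γ / β))).congr' ?_
  filter_upwards [eventually_ge_atTop 0] with t ht
  have hΦ1 : Φ t w + 1 ≠ 0 := slitPlane_ne_zero (add_one_mem_slitPlane (hsg.mapsTo t ht hw))
  rw [show (t : ℂ) + 1 = ((t + 1 : ℝ) : ℂ) by push_cast; ring, log_div_ofReal hΦ1 (by linarith)]
  simp only [Function.comp, abelRemainder, sigma_trajectory_eq_add hsg hnz hσ' hw ht]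
  ring
end
end
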